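/- arXiv:2410.16328 — 3 statements merged into one kernel-verified Lean document; each statement's English description precedes it below -/
import Mathlib

section
/- Let P : Cᵒᵖ → BoolAlg be a Boolean doctrine over a small category C with finite products. Let ī, j̄ ∈ ℕ, let Y₁, …, Y_ī, Z₁, …, Z_j̄ ∈ C, let αᵢ ∈ P(Yᵢ) for i = 1, …, ī and βⱼ ∈ P(Zⱼ) for j = 1, …, j̄. Then the following are equivalent: (1) for every propositional model (M, 𝔪) of P, if 𝔪_{Yᵢ}(αᵢ) = M(Yᵢ) for every i ∈ {1, …, ī}, then there is j ∈ {1, …, j̄} with 𝔪_{Zⱼ}(βⱼ) = M(Zⱼ); (2) there are n ∈ ℕ, indices l₁, …, l_n ∈ {1, …, ī} and morphisms gᵢ : ∏_{j=1}^{j̄} Zⱼ → Y_{lᵢ} (i = 1, …, n) such that, in P(∏_{j=1}^{j̄} Zⱼ), P(g₁)(α_{l₁}) ∧ … ∧ P(g_n)(α_{l_n}) ≤ P(pr₁)(β₁) ∨ … ∨ P(pr_{j̄})(β_{j̄}). -/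
open CategoryTheory CategoryTheory.Limits Opposite

universe w v u v₁ u₁ v₂ u₂ v₃ u₃

namespace BooleanDoctrine

/-- Elements of a Boolean algebra in the category `BoolAlg` can be acted on by morphisms. -/
instance (X Y : BoolAlg) : FunLike (X ⟶ Y) X Y :=
  { coe := fun f => f.hom
    coe_injective := fun _ _ h => BoolAlg.hom_ext (DFunLike.coe_injective h) }

/-- A filter of a Boolean algebra: contains `⊤`, closed under binary meets, upward closed. -/
def IsBAFilter {A : Type*} [BooleanAlgebra A] (F : Set A) : Prop :=
  (⊤ : A) ∈ F ∧ (∀ a b : A, a ∈ F → b ∈ F → a ⊓ b ∈ F) ∧ ∀ a b : A, a ∈ F → a ≤ b → b ∈ F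

/-- The fiber of a Boolean doctrine at an object of the base category. -/
abbrev fiber {C : Type u₁} [Category.{v₁} C] (P : Cᵒᵖ ⥤ BoolAlg.{w}) (X : C) : Type w :=
  P.obj (op X)

/-- A universal filter for a Boolean doctrine `P : Cᵒᵖ ⥤ BoolAlg`. -/
def IsUniversalFilter {C : Type u₁} [Category.{v₁} C] [HasFiniteProducts C]
    (P : Cᵒᵖ ⥤ BoolAlg.{w}) (F : ∀ X : C, Set (P.obj (op X))) : Prop :=
  (∀ (X Y : C) (f : X ⟶ Y) (α : P.obj (op Y)), α ∈ F Y → P.map f.op α ∈ F X) ∧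
    ∀ X : C, IsBAFilter (F X)

/-- A universal ideal for a Boolean doctrine `P : Cᵒᵖ ⥤ BoolAlg`. -/
def IsUniversalIdeal {C : Type u₁} [Category.{v₁} C] [HasFiniteProducts C]
    (P : Cᵒᵖ ⥤ BoolAlg.{w}) (I : ∀ X : C, Set (P.obj (op X))) : Prop :=
  (∀ (X Y : C) (m : ℕ) (f : Fin m → (X ⟶ Y)) (α : P.obj (op Y)),
      (Finset.univ.inf fun j => P.map (f j).op α) ∈ I X → α ∈ I Y) ∧
    (∀ (X : C) (a b : P.obj (op X)), a ≤ b → b ∈ I X → a ∈ I X) ∧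
    (∀ (X₁ X₂ : C) (α₁ : P.obj (op X₁)) (α₂ : P.obj (op X₂)), α₁ ∈ I X₁ → α₂ ∈ I X₂ →
      P.map (prod.fst : X₁ ⨯ X₂ ⟶ X₁).op α₁ ⊔ P.map (prod.snd : X₁ ⨯ X₂ ⟶ X₂).op α₂ ∈
        I (X₁ ⨯ X₂)) ∧
    (⊥ : P.obj (op (⊤_ C))) ∈ I (⊤_ C)

/-- A universal ultrafilter for a Boolean doctrine `P : Cᵒᵖ ⥤ BoolAlg`. -/
def IsUniversalUltrafilter {C : Type u₁} [Category.{v₁} C] [HasFiniteProducts C]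
    (P : Cᵒᵖ ⥤ BoolAlg.{w}) (F : ∀ X : C, Set (P.obj (op X))) : Prop :=
  (∀ (X Y : C) (f : X ⟶ Y) (α : P.obj (op Y)), α ∈ F Y → P.map f.op α ∈ F X) ∧
    (∀ X : C, IsBAFilter (F X)) ∧
    (∀ (X₁ X₂ : C) (α₁ : P.obj (op X₁)) (α₂ : P.obj (op X₂)),
      P.map (prod.fst : X₁ ⨯ X₂ ⟶ X₁).op α₁ ⊔ P.map (prod.snd : X₁ ⨯ X₂ ⟶ X₂).op α₂ ∈
          F (X₁ ⨯ X₂) →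
        α₁ ∈ F X₁ ∨ α₂ ∈ F X₂) ∧
    (⊥ : P.obj (op (⊤_ C))) ∉ F (⊤_ C)

/-- Richness of a Boolean doctrine with respect to a family of subsets of the fibers. -/
def IsRich {C : Type u₁} [Category.{v₁} C] [HasFiniteProducts C]
    (P : Cᵒᵖ ⥤ BoolAlg.{w}) (F : ∀ X : C, Set (P.obj (op X))) : Prop :=
  ∀ (X : C) (α : P.obj (op X)), α ∉ F X → ∃ c : (⊤_ C) ⟶ X, P.map c.op α ∉ F (⊤_ C)

/-- The failure of the "universal closure" of `a` witnessed by a constant `c : ⊤ ⟶ X`. -/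
def IsRichAt {C : Type u₁} [Category.{v₁} C] [HasFiniteProducts C]
    (P : Cᵒᵖ ⥤ BoolAlg.{w}) (F : ∀ X : C, Set (P.obj (op X)))
    (X : C) (a : P.obj (op X)) : Prop :=
  ∃ c : (⊤_ C) ⟶ X, P.map c.op a ∉ F (⊤_ C)

/-- The universal filter generated by a family of subsets of the fibers: the intersection of
all universal filters containing the family componentwise. -/
def genUnivFilter {C : Type u₁} [Category.{v₁} C] [HasFiniteProducts C]
    (P : Cᵒᵖ ⥤ BoolAlg.{w}) (A : ∀ X : C, Set (P.obj (op X))) :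
    ∀ X : C, Set (P.obj (op X)) := fun X =>
  {φ | ∀ G : ∀ X' : C, Set (P.obj (op X')),
    IsUniversalFilter P G → (∀ X', A X' ⊆ G X') → φ ∈ G X}

/-- The universal ideal generated by a family of subsets of the fibers: the intersection of
all universal ideals containing the family componentwise. -/
def genUnivIdeal {C : Type u₁} [Category.{v₁} C] [HasFiniteProducts C]
    (P : Cᵒᵖ ⥤ BoolAlg.{w}) (A : ∀ X : C, Set (P.obj (op X))) :
    ∀ X : C, Set (P.obj (op X)) := fun X =>
  {φ | ∀ J : ∀ X' : C, Set (P.obj (op X')),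
    IsUniversalIdeal P J → (∀ X', A X' ⊆ J X') → φ ∈ J X}

/-- The family of subsets of the fibers placing the element `α i` in the component `Y i`. -/
def familyOfPoints {C : Type u₁} [Category.{v₁} C] (P : Cᵒᵖ ⥤ BoolAlg.{w}) {ι : Type u₃}
    (Y : ι → C) (α : ∀ i, P.obj (op (Y i))) : ∀ X : C, Set (P.obj (op X)) := fun X =>
  {a | ∃ (i : ι) (h : Y i = X), a = P.map (eqToHom h.symm).op (α i)}

/-- The subsets doctrine, sending a set to its powerset Boolean algebra and a function to
its preimage map. -/
def subsetsDoctrine : (Type v)ᵒᵖ ⥤ BoolAlg.{v} where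
  obj X := BoolAlg.of (Set X.unop)
  map f :=
    BoolAlg.ofHom
    { toFun := fun S => f.unop ⁻¹' S
      map_sup' := fun _ _ => rfl
      map_inf' := fun _ _ => rfl
      map_top' := rfl
      map_bot' := rfl }
  map_id _ := rfl
  map_comp _ _ := rfl

/-- A Boolean doctrine morphism: a finite-product-preserving functor together with a
natural transformation. -/
structure DoctrineHom {C : Type u₁} [Category.{v₁} C] {D : Type u₂} [Category.{v₂} D]
    (P : Cᵒᵖ ⥤ BoolAlg.{w}) (R : Dᵒᵖ ⥤ BoolAlg.{w}) where
  functor : C ⥤ D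
  preserves : PreservesFiniteProducts functor
  trans : P ⟶ functor.op ⋙ R

/-- Composition of Boolean doctrine morphisms. -/
def DoctrineHom.comp {C : Type u₁} [Category.{v₁} C] {D : Type u₂} [Category.{v₂} D]
    {E : Type u₃} [Category.{v₃} E]
    {P : Cᵒᵖ ⥤ BoolAlg.{w}} {R : Dᵒᵖ ⥤ BoolAlg.{w}} {S : Eᵒᵖ ⥤ BoolAlg.{w}}
    (Φ : DoctrineHom P R) (Ψ : DoctrineHom R S) : DoctrineHom P S where
  functor := Φ.functor ⋙ Ψ.functor
  preserves := by
    have := Φ.preserves; have := Ψ.preserves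
    infer_instance
  trans := Φ.trans ≫ Functor.whiskerLeft Φ.functor.op Ψ.trans

/-- A first-order structure on a Boolean doctrine: fiberwise right adjoints to reindexing
along first projections, satisfying the Beck–Chevalley condition. -/
structure FOStructure {C : Type u₁} [Category.{v₁} C] [HasFiniteProducts C]
    (P : Cᵒᵖ ⥤ BoolAlg.{w}) where
  fa : ∀ X Y : C, P.obj (op (X ⨯ Y)) → P.obj (op X)
  adj : ∀ (X Y : C) (α : P.obj (op X)) (β : P.obj (op (X ⨯ Y))),
      α ≤ fa X Y β ↔ P.map (prod.fst : X ⨯ Y ⟶ X).op α ≤ β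
  bc : ∀ (X X' Y : C) (f : X' ⟶ X) (β : P.obj (op (X ⨯ Y))),
      P.map f.op (fa X Y β) = fa X' Y (P.map (prod.map f (𝟙 Y)).op β)

/-- The existential quantifier `∃ = ¬∀¬` associated to a first-order structure. -/
noncomputable def FOStructure.ex {C : Type u₁} [Category.{v₁} C] [HasFiniteProducts C]
    {P : Cᵒᵖ ⥤ BoolAlg.{w}} (fo : FOStructure P) (X Y : C)
    (β : P.obj (op (X ⨯ Y))) : P.obj (op X) :=
  (fo.fa X Y βᶜ)ᶜ

/-- The canonical comparison morphism `M X ⨯ M Y ⟶ M (X ⨯ Y)` of a Boolean doctrine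
morphism, inverse to the product comparison morphism. -/
noncomputable def DoctrineHom.prodPair {C : Type u₁} [Category.{v₁} C] [HasFiniteProducts C]
    {D : Type u₂} [Category.{v₂} D] [HasFiniteProducts D]
    {P : Cᵒᵖ ⥤ BoolAlg.{w}} {R : Dᵒᵖ ⥤ BoolAlg.{w}} (Φ : DoctrineHom P R) (X Y : C) :
    (Φ.functor.obj X ⨯ Φ.functor.obj Y) ⟶ Φ.functor.obj (X ⨯ Y) :=
  letI := Φ.preserves
  (PreservesLimitPair.iso Φ.functor X Y).inv

/-- The image of an element of `P (X ⨯ Y)` in `R (M X ⨯ M Y)`, transported along the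
canonical isomorphism `M (X ⨯ Y) ≅ M X ⨯ M Y`. -/
noncomputable def DoctrineHom.transProd {C : Type u₁} [Category.{v₁} C] [HasFiniteProducts C]
    {D : Type u₂} [Category.{v₂} D] [HasFiniteProducts D]
    {P : Cᵒᵖ ⥤ BoolAlg.{w}} {R : Dᵒᵖ ⥤ BoolAlg.{w}} (Φ : DoctrineHom P R) (X Y : C)
    (α : P.obj (op (X ⨯ Y))) : R.obj (op (Φ.functor.obj X ⨯ Φ.functor.obj Y)) :=
  R.map (Φ.prodPair X Y).op (Φ.trans.app (op (X ⨯ Y)) α)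

/-- A Boolean doctrine morphism between first-order Boolean doctrines is first-order when it
commutes with the universal quantifiers. -/
def DoctrineHom.IsFO {C : Type u₁} [Category.{v₁} C] [HasFiniteProducts C]
    {D : Type u₂} [Category.{v₂} D] [HasFiniteProducts D]
    {P : Cᵒᵖ ⥤ BoolAlg.{w}} {R : Dᵒᵖ ⥤ BoolAlg.{w}} (Φ : DoctrineHom P R)
    (foP : FOStructure P) (foR : FOStructure R) : Prop :=
  ∀ (X Y : C) (β : P.obj (op (X ⨯ Y))),
    (Φ.trans.app (op X) (foP.fa X Y β) : R.obj (op (Φ.functor.obj X))) =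
      foR.fa (Φ.functor.obj X) (Φ.functor.obj Y) (Φ.transProd X Y β)

/-- The Boolean doctrine morphism with identity functor part induced by a natural
transformation between two doctrines over the same base. -/
def idDoctrineHom {C : Type u₁} [Category.{v₁} C] {P Q : Cᵒᵖ ⥤ BoolAlg.{w}} (η : P ⟶ Q) :
    DoctrineHom P Q where
  functor := 𝟭 C
  preserves := inferInstance
  trans := η

/-- A quantifier completion of a Boolean doctrine `P`: a first-order Boolean doctrine `Q`
over the same base category together with a Boolean doctrine morphism `(𝟭 C, ι) : P ⟶ Q`
whose functor part is the identity, such that every Boolean doctrine morphism from `P` to a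
first-order Boolean doctrine factors uniquely through it via a first-order Boolean doctrine
morphism. -/
structure QuantifierCompletion.{w', v', u', v₁', u₁'} {C : Type u₁'} [Category.{v₁'} C]
    [HasFiniteProducts C] (P : Cᵒᵖ ⥤ BoolAlg.{w'}) where
  Q : Cᵒᵖ ⥤ BoolAlg.{w'}
  fo : FOStructure Q
  ι : P ⟶ Q
  univ : ∀ {D : Type u'} [Category.{v'} D] [HasFiniteProducts D]
      (R : Dᵒᵖ ⥤ BoolAlg.{w'}) (foR : FOStructure R) (Φ : DoctrineHom P R),
      ∃! Ψ : DoctrineHom Q R, Ψ.IsFO fo foR ∧ Φ = (idDoctrineHom ι).comp Ψ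

/-- A propositional model of a Boolean doctrine: a Boolean doctrine morphism to the
subsets doctrine. -/
abbrev PropModel {C : Type u} [Category.{v} C] (P : Cᵒᵖ ⥤ BoolAlg.{v}) :=
  DoctrineHom P subsetsDoctrine.{v}

/-- The subset of `M X` interpreting an element `α ∈ P X` in a propositional model. -/
def PropModel.interp {C : Type u} [Category.{v} C] {P : Cᵒᵖ ⥤ BoolAlg.{v}}
    (M : PropModel P) {X : C} (α : P.obj (op X)) : Set (M.functor.obj X) :=
  M.trans.app (op X) α



/-- The object map of a Boolean doctrine morphism. -/
abbrev DoctrineHom.onObj {C : Type u₁} [Category.{v₁} C] {D : Type u₂} [Category.{v₂} D]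
    {P : Cᵒᵖ ⥤ BoolAlg.{w}} {R : Dᵒᵖ ⥤ BoolAlg.{w}} (Φ : DoctrineHom P R) (X : C) : D :=
  Φ.functor.obj X

/-- The component at `X` of the natural transformation of a Boolean doctrine morphism,
applied to an element of the fiber. -/
abbrev DoctrineHom.appAt {C : Type u₁} [Category.{v₁} C] {D : Type u₂} [Category.{v₂} D]
    {P : Cᵒᵖ ⥤ BoolAlg.{w}} {R : Dᵒᵖ ⥤ BoolAlg.{w}} (Φ : DoctrineHom P R) (X : C)
    (a : P.obj (op X)) : R.obj (op (Φ.functor.obj X)) :=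
  Φ.trans.app (op X) a

end BooleanDoctrine

/-!
Soundness: a propositional model `M` preserves finite products, so points of the `M (Z j)`
falsifying every `β j` assemble to a point of `M (∏ᶜ Z)`. That point satisfies every
`P (g i) (α (l i))`, hence the disjunction of the `P (π j) (β j)`; so for some `j` its
projection, which is the chosen point of `M (Z j)`, satisfies `β j` after all.

Completeness: if no finite meet of reindexings of the `α i` to `W = ∏ᶜ Z` lies below
`b = ⨆ j, P (π j) (β j)`, the prime ideal theorem yields a prime ideal `J` of `P W` containing
`b` but none of those reindexings. The model `Hom(W, -)`, in which `f` satisfies `a` iff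
`P f a ∉ J`, then validates every `α i`, while the projection `π j` falsifies `β j` for each `j`.
-/

theorem CategoryTheory.Types.exists_map_π_eq_of_preservesLimit {C : Type*} [Category C]
    {J : Type v} (F : C ⥤ Type (max v w)) (Z : J → C) [HasProduct Z]
    [PreservesLimit (Discrete.functor Z) F] (x : ∀ j, F.obj (Z j)) :
    ∃ y : F.obj (∏ᶜ Z), ∀ j, F.map (Pi.π Z j) y = x j := by
  refine ⟨inv (piComparison F Z) ((Types.productIso _).inv x), fun j => ?_⟩
  rw [← types_comp_apply (inv _) (F.map _),
    (IsIso.inv_comp_eq _).2 (piComparison_comp_π F Z j).symm]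
  exact CategoryTheory.congr_fun (Types.productIso_inv_comp_π _ j) x

theorem Order.Ideal.IsPrime.inf_mem_iff {A : Type*} [SemilatticeInf A] {J : Order.Ideal A}
    (hJ : J.IsPrime) {a b : A} : a ⊓ b ∈ J ↔ a ∈ J ∨ b ∈ J :=
  ⟨hJ.mem_or_mem, fun h => h.elim (J.lower inf_le_left) (J.lower inf_le_right)⟩

theorem Order.Ideal.exists_isPrime_of_forall_finset_inf_not_le {A ι : Type*} [DistribLattice A]
    [OrderTop A] (a : ι → A) (b : A) (h : ∀ T : Finset ι, ¬T.inf a ≤ b) :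
    ∃ J : Order.Ideal A, J.IsPrime ∧ b ∈ J ∧ ∀ i, a i ∉ J := by
  classical
  have hF : Order.IsPFilter {x | ∃ T : Finset ι, T.inf a ≤ x} := by
    refine .of_def ⟨⊤, ∅, le_top⟩ ?_ fun hxy ⟨T, hT⟩ => ⟨T, hT.trans hxy⟩
    rintro x ⟨T₁, h₁⟩ y ⟨T₂, h₂⟩
    refine ⟨(T₁ ∪ T₂).inf a, ⟨T₁ ∪ T₂, le_rfl⟩, ?_, ?_⟩ <;> rw [Finset.inf_union]
    exacts [inf_le_of_left_le h₁, inf_le_of_right_le h₂]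
  have hdisj : Disjoint (hF.toPFilter : Set A) (Order.Ideal.principal b) :=
    Set.disjoint_left.2 fun _ ⟨T, hT⟩ hxb => h T (hT.trans (Order.Ideal.mem_principal.1 hxb))
  obtain ⟨J, hJ, hbJ, hFJ⟩ := DistribLattice.prime_ideal_of_disjoint_filter_ideal hdisj
  refine ⟨J, hJ, hbJ Order.Ideal.mem_principal_self, fun i hi => ?_⟩
  exact Set.disjoint_left.1 hFJ ⟨{i}, (Finset.inf_singleton).le⟩ hi

theorem Finset.exists_fin_univ_inf_eq {α ι : Type*} [SemilatticeInf α] [OrderTop α]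
    (T : Finset ι) (a : ι → α) :
    ∃ (n : ℕ) (k : Fin n → ι), Finset.univ.inf (a ∘ k) = T.inf a := by
  refine ⟨T.card, fun i => T.equivFin.symm i, le_antisymm (Finset.le_inf fun p hp => ?_)
    (Finset.le_inf fun i _ => Finset.inf_le (T.equivFin.symm i).2)⟩
  simpa using Finset.inf_le (f := a ∘ fun i => (T.equivFin.symm i : ι))
    (Finset.mem_univ (T.equivFin ⟨p, hp⟩))

namespace BooleanDoctrine

instance (X Y : BoolAlg) : BoundedLatticeHomClass (X ⟶ Y) X Y where
  map_sup f := map_sup f.hom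
  map_inf f := map_inf f.hom
  map_top f := map_top f.hom
  map_bot f := map_bot f.hom

namespace PropModel

variable {C : Type u} [SmallCategory C] {P : Cᵒᵖ ⥤ BoolAlg.{u}}

theorem interp_map (M : PropModel P) {X X' : C} (f : X' ⟶ X) (a : P.obj (op X)) :
    M.interp (P.map f.op a) = M.functor.map f ⁻¹' M.interp a :=
  DFunLike.congr_fun (M.trans.naturality f.op) a

theorem interp_mono (M : PropModel P) {X : C} {a b : P.obj (op X)} (h : a ≤ b) :
    M.interp a ⊆ M.interp b :=
  OrderHomClass.mono (M.trans.app (op X)) h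

theorem interp_finset_inf (M : PropModel P) {X : C} {ι : Type*} (s : Finset ι)
    (a : ι → P.obj (op X)) : M.interp (s.inf a) = ⋂ i ∈ s, M.interp (a i) := by
  simp only [interp, map_finset_inf]
  exact Finset.inf_eq_iInf s _

theorem interp_finset_sup (M : PropModel P) {X : C} {ι : Type*} (s : Finset ι)
    (a : ι → P.obj (op X)) : M.interp (s.sup a) = ⋃ i ∈ s, M.interp (a i) := by
  simp only [interp, map_finset_sup]
  exact Finset.sup_eq_iSup s _

def ofPrimeIdeal (P : Cᵒᵖ ⥤ BoolAlg.{u}) (W : C) (J : Order.Ideal (P.obj (op W)))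
    (hJ : J.IsPrime) : PropModel P where
  functor := coyoneda.obj (op W)
  preserves := ⟨fun _ => inferInstance⟩
  trans :=
    { app X := BoolAlg.ofHom
        { toFun a := {f | P.map f.op a ∉ J}
          map_sup' a b := by ext f; simp [Order.Ideal.sup_mem_iff, ← not_and_or]
          map_inf' a b := by ext f; simp [Order.Ideal.IsPrime.inf_mem_iff hJ]
          map_top' := by ext f; simp [hJ.top_notMem]
          map_bot' := by ext f; simp }
      naturality X X' h := by
        ext a
        refine Set.ext fun f => ?_
        change P.map f.op (P.map h a) ∉ J ↔ P.map (f ≫ h.unop).op a ∉ J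
        rw [op_comp, Quiver.Hom.op_unop, P.map_comp]
        rfl }

theorem mem_interp_ofPrimeIdeal {W : C} {J : Order.Ideal (P.obj (op W))} (hJ : J.IsPrime)
    {X : C} (f : W ⟶ X) (a : P.obj (op X)) :
    f ∈ (ofPrimeIdeal P W J hJ).interp a ↔ P.map f.op a ∉ J :=
  Iff.rfl

theorem exists_forall_mem_of_forall_mem_sup_π [HasFiniteProducts C] (M : PropModel P)
    {J : Type} [Fintype J]
    (Z : J → C) (β : ∀ j, P.obj (op (Z j)))
    (h : ∀ x, x ∈ M.interp (Finset.univ.sup fun j => P.map (Pi.π Z j).op (β j))) :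
    ∃ j, ∀ x : M.functor.obj (Z j), x ∈ M.interp (β j) := by
  by_contra! hβ
  choose x hx using hβ
  have := M.preserves
  obtain ⟨w, hw⟩ := Types.exists_map_π_eq_of_preservesLimit M.functor Z x
  have hw_mem := h w
  simp only [interp_finset_sup, interp_map, Set.mem_iUnion, Set.mem_preimage, hw] at hw_mem
  obtain ⟨j, -, hj⟩ := hw_mem
  exact hx j hj

theorem exists_forall_mem_of_inf_le_sup [HasFiniteProducts C] (M : PropModel P)
    {ι K : Type*} {J : Type} [Fintype K] [Fintype J] (Y : ι → C) (Z : J → C) (α : ∀ i, P.obj (op (Y i))) (β : ∀ j, P.obj (op (Z j)))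
    (l : K → ι) (g : ∀ k, ∏ᶜ Z ⟶ Y (l k))
    (hle : (Finset.univ.inf fun k => P.map (g k).op (α (l k))) ≤
      Finset.univ.sup fun j => P.map (Pi.π Z j).op (β j))
    (hα : ∀ i, ∀ x : M.functor.obj (Y i), x ∈ M.interp (α i)) :
    ∃ j, ∀ x : M.functor.obj (Z j), x ∈ M.interp (β j) :=
  M.exists_forall_mem_of_forall_mem_sup_π Z β fun w =>
    M.interp_mono hle <| by simp [interp_finset_inf, interp_map, hα]

end PropModel

theorem stmt2 {C : Type u} [SmallCategory C] [HasFiniteProducts C]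
    (P : Cᵒᵖ ⥤ BoolAlg.{u}) {ibar jbar : ℕ} (Y : Fin ibar → C) (Z : Fin jbar → C)
    (α : ∀ i, P.obj (op (Y i))) (β : ∀ j, P.obj (op (Z j))) :
    (∀ M : PropModel P,
        (∀ i, ∀ x : M.functor.obj (Y i), x ∈ PropModel.interp M (α i)) →
          ∃ j, ∀ x : M.functor.obj (Z j), x ∈ PropModel.interp M (β j)) ↔
      ∃ (n : ℕ) (l : Fin n → Fin ibar) (g : ∀ i : Fin n, (∏ᶜ Z) ⟶ Y (l i)),
        (Finset.univ.inf fun i => P.map (g i).op (α (l i))) ≤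
          Finset.univ.sup fun j => P.map (Pi.π Z j).op (β j) := by
  refine ⟨fun hmodels => ?_, fun ⟨n, l, g, hle⟩ M hα => M.exists_forall_mem_of_inf_le_sup
    Y Z α β l g hle hα⟩
  by_contra! hno
  obtain ⟨J, hJ, hβJ, hαJ⟩ := Order.Ideal.exists_isPrime_of_forall_finset_inf_not_le
    (fun p : Σ i, (∏ᶜ Z ⟶ Y i) => P.map p.2.op (α p.1))
    (Finset.univ.sup fun j => P.map (Pi.π Z j).op (β j)) fun T hT => by
      obtain ⟨n, k, hk⟩ := T.exists_fin_univ_inf_eq fun p => P.map p.2.op (α p.1)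
      exact hno n (fun i => (k i).1) (fun i => (k i).2) (hk.trans_le hT)
  obtain ⟨j, hj⟩ := hmodels (PropModel.ofPrimeIdeal P _ J hJ) fun i f =>
    (PropModel.mem_interp_ofPrimeIdeal hJ f _).2 (hαJ ⟨i, f⟩)
  refine (PropModel.mem_interp_ofPrimeIdeal hJ _ _).1 (hj (Pi.π Z j)) (J.lower ?_ hβJ)
  exact Finset.le_sup (f := fun j => P.map (Pi.π Z j).op (β j)) (Finset.mem_univ j)

end BooleanDoctrine
end

section
/- Let P : Cᵒᵖ → BoolAlg be a Boolean doctrine over a category C with finite products, and let A = (A_X)_{X ∈ C} be a family with A_X ⊆ P(X) for each X ∈ C. Then the universal filter for P generated by A is the family (F_X)_{X ∈ C} where F_X is the set of φ ∈ P(X) such that there are n ∈ ℕ (possibly 0), objects Y₁, …, Y_n ∈ C, elements α₁ ∈ A_{Y₁}, …, α_n ∈ A_{Y_n} and morphisms fᵢ : X → Yᵢ (i = 1, …, n) with P(f₁)(α₁) ∧ … ∧ P(f_n)(α_n) ≤ φ in P(X). -/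
open CategoryTheory CategoryTheory.Limits Opposite

universe w v u v₁ u₁ v₂ u₂ v₃ u₃

/-!
The elements lying above a finite meet of reindexings `P(f)(α)` with `α ∈ A` form, in each
fiber, the Boolean filter generated by the reindexings. Reindexing is a meet- and
top-preserving map sending reindexings to reindexings, so these filters form a universal
filter; conversely a universal filter containing `A` contains every reindexing of `A`, hence
every such filter.
-/

theorem Fin.inf_univ_append {L : Type*} [SemilatticeInf L] [OrderTop L] {m n : ℕ}
    (b : Fin m → L) (c : Fin n → L) :
    Finset.univ.inf (Fin.append b c) = Finset.univ.inf b ⊓ Finset.univ.inf c := by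
  refine le_antisymm (le_inf ?_ ?_) (Finset.le_inf fun i _ => ?_)
  · exact Finset.le_inf fun i _ => by
      simpa using Finset.inf_le (f := Fin.append b c) (Finset.mem_univ (Fin.castAdd n i))
  · exact Finset.le_inf fun i _ => by
      simpa using Finset.inf_le (f := Fin.append b c) (Finset.mem_univ (Fin.natAdd m i))
  · induction i using Fin.addCases with
    | left i => simpa using inf_le_of_left_le (Finset.inf_le (Finset.mem_univ i))
    | right i => simpa using inf_le_of_right_le (Finset.inf_le (Finset.mem_univ i))

namespace BooleanDoctrine

section FilterClosure

variable {L : Type*}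

def filterClosure [SemilatticeInf L] [OrderTop L] (S : Set L) : Set L :=
  {φ | ∃ (n : ℕ) (b : Fin n → L), (∀ i, b i ∈ S) ∧ Finset.univ.inf b ≤ φ}

theorem subset_filterClosure [SemilatticeInf L] [OrderTop L] (S : Set L) :
    S ⊆ filterClosure S :=
  fun a ha => ⟨1, fun _ => a, fun _ => ha, by simp⟩

theorem isBAFilter_filterClosure [BooleanAlgebra L] (S : Set L) :
    IsBAFilter (filterClosure S) := by
  refine ⟨⟨0, Fin.elim0, Fin.rec0, by simp⟩, ?_, ?_⟩
  · rintro a b ⟨m, b₁, hb₁, hle₁⟩ ⟨n, b₂, hb₂, hle₂⟩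
    refine ⟨m + n, Fin.append b₁ b₂, Fin.addCases (by simpa using hb₁) (by simpa using hb₂), ?_⟩
    rw [Fin.inf_univ_append]
    exact inf_le_inf hle₁ hle₂
  · rintro a b ⟨n, c, hc, hle⟩ hab
    exact ⟨n, c, hc, hle.trans hab⟩

theorem IsBAFilter.finset_inf_mem [BooleanAlgebra L] {F : Set L} (hF : IsBAFilter F)
    {ι : Type*} (s : Finset ι) {g : ι → L} (hg : ∀ i ∈ s, g i ∈ F) : s.inf g ∈ F := by
  classical
  induction s using Finset.induction_on with
  | empty => exact hF.1
  | insert i s _ ih =>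
    rw [Finset.inf_insert]
    exact hF.2.1 _ _ (hg i (s.mem_insert_self i)) (ih fun j hj => hg j (s.mem_insert_of_mem hj))

theorem IsBAFilter.filterClosure_subset [BooleanAlgebra L] {F S : Set L} (hF : IsBAFilter F)
    (hSF : S ⊆ F) : filterClosure S ⊆ F := by
  rintro a ⟨n, b, hb, hle⟩
  exact hF.2.2 _ a (hF.finset_inf_mem _ fun i _ => hSF (hb i)) hle

theorem map_mem_filterClosure {M F : Type*} [SemilatticeInf L] [OrderTop L]
    [SemilatticeInf M] [OrderTop M] [FunLike F L M] [InfTopHomClass F L M] (h : F)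
    {S : Set L} {T : Set M} (hST : ∀ s ∈ S, h s ∈ T) {a : L} (ha : a ∈ filterClosure S) :
    h a ∈ filterClosure T := by
  obtain ⟨n, b, hb, hle⟩ := ha
  refine ⟨n, h ∘ b, fun i => hST _ (hb i), ?_⟩
  rw [← map_finset_inf]
  exact OrderHomClass.mono h hle

end FilterClosure

section Reindexings

variable {C : Type u₁} [Category.{v₁} C] (P : Cᵒᵖ ⥤ BoolAlg.{w})
  (A : ∀ X : C, Set (P.obj (op X)))

def reindexings (X : C) : Set (P.obj (op X)) :=
  {β | ∃ (Y : C) (f : X ⟶ Y), ∃ α ∈ A Y, P.map f.op α = β}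

variable {P A}

theorem mem_reindexings_of_mem {X : C} {α : P.obj (op X)} (hα : α ∈ A X) :
    α ∈ reindexings P A X :=
  ⟨X, 𝟙 X, α, hα, by simp⟩

theorem reindex_mem_reindexings {X Y : C} (g : X ⟶ Y) {β : P.obj (op Y)}
    (hβ : β ∈ reindexings P A Y) : P.map g.op β ∈ reindexings P A X := by
  obtain ⟨Z, f, α, hα, rfl⟩ := hβ
  exact ⟨Z, g ≫ f, α, hα, by simp [P.map_comp]⟩

theorem IsUniversalFilter.reindexings_subset [HasFiniteProducts C]
    {G : ∀ X : C, Set (P.obj (op X))} (hG : IsUniversalFilter P G) (hAG : ∀ X, A X ⊆ G X)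
    (X : C) : reindexings P A X ⊆ G X := by
  rintro _ ⟨Y, f, α, hα, rfl⟩
  exact hG.1 X Y f α (hAG Y hα)

theorem mem_filterClosure_reindexings_iff {X : C} {φ : P.obj (op X)} :
    φ ∈ filterClosure (reindexings P A X) ↔
      ∃ (n : ℕ) (Y : Fin n → C) (α : ∀ i, P.obj (op (Y i))) (f : ∀ i, X ⟶ Y i),
        (∀ i, α i ∈ A (Y i)) ∧ (Finset.univ.inf fun i => P.map (f i).op (α i)) ≤ φ := by
  constructor
  · rintro ⟨n, b, hb, hle⟩
    choose Y f α hα hb using hb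
    refine ⟨n, Y, α, f, hα, ?_⟩
    simpa only [hb] using hle
  · rintro ⟨n, Y, α, f, hα, hle⟩
    exact ⟨n, _, fun i => ⟨Y i, f i, α i, hα i, rfl⟩, hle⟩

theorem isUniversalFilter_filterClosure_reindexings [HasFiniteProducts C] :
    IsUniversalFilter P fun X => filterClosure (reindexings P A X) :=
  ⟨fun _ _ g _ => map_mem_filterClosure (P.map g.op).hom fun _ => reindex_mem_reindexings g,
    fun _ => isBAFilter_filterClosure _⟩

end Reindexings

theorem stmt10 {C : Type u₁} [Category.{v₁} C] [HasFiniteProducts C]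
    (P : Cᵒᵖ ⥤ BoolAlg.{w}) (A Fgen : ∀ X : C, Set (P.obj (op X)))
    (hFgen : ∀ (X : C) (φ : P.obj (op X)),
      φ ∈ Fgen X ↔
        ∃ (n : ℕ) (Y : Fin n → C) (α : ∀ i, P.obj (op (Y i))) (f : ∀ i, X ⟶ Y i),
          (∀ i, α i ∈ A (Y i)) ∧ (Finset.univ.inf fun i => P.map (f i).op (α i)) ≤ φ) :
    IsUniversalFilter P Fgen ∧ (∀ X : C, A X ⊆ Fgen X) ∧
      ∀ G : ∀ X : C, Set (P.obj (op X)),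
        IsUniversalFilter P G → (∀ X : C, A X ⊆ G X) → ∀ X : C, Fgen X ⊆ G X := by
  obtain rfl : Fgen = fun X => filterClosure (reindexings P A X) :=
    funext fun X => Set.ext fun φ => (hFgen X φ).trans mem_filterClosure_reindexings_iff.symm
  exact ⟨isUniversalFilter_filterClosure_reindexings,
    fun X _ hα => subset_filterClosure _ (mem_reindexings_of_mem hα),
    fun G hG hAG X => (hG.2 X).filterClosure_subset (hG.reindexings_subset hAG X)⟩

end BooleanDoctrine
end

section
/- Let P : Cᵒᵖ → BoolAlg be a Boolean doctrine over a category C with finite products, and let A = (A_X)_{X ∈ C} be a family with A_X ⊆ P(X) for each X ∈ C. Then the universal ideal for P generated by A is the family (I_X)_{X ∈ C} where I_X is the set of φ ∈ P(X) such that there are n, m ∈ ℕ (possibly 0), objects Y₁, …, Y_n ∈ C, elements α₁ ∈ A_{Y₁}, …, α_n ∈ A_{Y_n} and morphisms fⱼ : ∏_{i=1}^{n} Yᵢ → X (j = 1, …, m) with ⋀_{j=1}^{m} P(fⱼ)(φ) ≤ ⋁_{i=1}^{n} P(prᵢ)(αᵢ) in P(∏_{i=1}^{n} Yᵢ). -/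
open CategoryTheory CategoryTheory.Limits Opposite

universe w v u v₁ u₁ v₂ u₂ v₃ u₃

namespace BooleanDoctrine

/-! The family `univIdealSpan P A` of all `φ` admitting a witness (generators `αᵢ ∈ A(Yᵢ)` and
morphisms `fⱼ : ∏ Yᵢ ⟶ X` with `⋀ⱼ P(fⱼ)φ ≤ ⋁ᵢ P(prᵢ)αᵢ`) lies in every universal ideal `J ⊇ A`:
the join `⋁ᵢ P(prᵢ)αᵢ` is in `J` by induction on the generators using the product axiom, hence so
is `⋀ⱼ P(fⱼ)φ` by downward closure, and then `φ` by the reflection axiom. Conversely it is a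
universal ideal: witnesses compose with reindexings, and witnesses for `α₁` and `α₂` merge into
one for `P(pr₁)α₁ ∨ P(pr₂)α₂` over the disjoint union of their generators, by distributivity.
Witnesses are indexed by arbitrary finite types rather than `Fin n`, so that this merge needs no
index arithmetic; `Pi.reindex` converts back to `Fin n` at the end. -/

open Finset

lemma sup_univ_option {α ι : Type*} [SemilatticeSup α] [OrderBot α] [Fintype ι]
    (f : Option ι → α) : univ.sup f = f none ⊔ univ.sup fun i => f (some i) := by
  rw [univ_option, insertNone, OrderEmbedding.coe_ofMapLEIff, sup_cons, sup_map]; rfl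

section

variable {C : Type u₁} [Category.{v₁} C] (P : Cᵒᵖ ⥤ BoolAlg.{w})

lemma map_comp_apply {X Y Z : C} (f : X ⟶ Y) (g : Y ⟶ Z) (a : P.obj (op Z)) :
    P.map (f ≫ g).op a = P.map f.op (P.map g.op a) := by
  rw [op_comp, P.map_comp]; rfl

lemma map_id_apply {X : C} (a : P.obj (op X)) : P.map (𝟙 X).op a = a := by
  rw [op_id, P.map_id]; rfl

variable [HasFiniteProducts C]

noncomputable def supProj {ι : Type} [Fintype ι] (Y : ι → C) (α : ∀ i, P.obj (op (Y i))) :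
    P.obj (op (∏ᶜ Y)) :=
  univ.sup fun i => P.map (Pi.π Y i).op (α i)

variable {P}

lemma map_reindex_hom_supProj {ι κ : Type} [Fintype ι] [Fintype κ] (ε : κ ≃ ι) (Y : ι → C)
    (α : ∀ i, P.obj (op (Y i))) :
    P.map (Pi.reindex ε Y).hom.op (supProj P Y α) = supProj P (Y ∘ ε) fun k => α (ε k) := by
  rw [supProj, map_finset_sup, ← univ_map_equiv_to_embedding ε, sup_map]
  refine sup_congr rfl fun k _ => ?_
  dsimp only [Function.comp_apply, Equiv.coe_toEmbedding]
  rw [← map_comp_apply, Pi.reindex_hom_π]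

lemma supProj_of_isEmpty {ι : Type} [Fintype ι] [IsEmpty ι] (Y : ι → C)
    (α : ∀ i, P.obj (op (Y i))) : supProj P Y α = ⊥ := by
  simp [supProj, univ_eq_empty]

noncomputable def piOptionSplit {ι : Type} [Fintype ι] (Y : Option ι → C) :
    ∏ᶜ Y ⟶ Y none ⨯ ∏ᶜ fun i => Y (some i) :=
  prod.lift (Pi.π Y none) (Pi.lift fun i => Pi.π Y (some i))

noncomputable def piOptionJoin {ι : Type} [Fintype ι] (Y : Option ι → C) :
    Y none ⨯ (∏ᶜ fun i => Y (some i)) ⟶ ∏ᶜ Y :=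
  Pi.lift fun o => Option.rec (motive := fun o => _ ⟶ Y o) prod.fst
    (fun i => prod.snd ≫ Pi.π _ i) o

lemma piOptionJoin_comp_split {ι : Type} [Fintype ι] (Y : Option ι → C) :
    piOptionJoin Y ≫ piOptionSplit Y = 𝟙 _ := by
  apply prod.hom_ext
  · rw [Category.assoc, piOptionSplit, prod.lift_fst]
    simp [piOptionJoin]
  · apply Pi.hom_ext
    intro i
    rw [Category.assoc, Category.assoc, piOptionSplit, prod.lift_snd_assoc]
    simp [piOptionJoin]

lemma supProj_option {ι : Type} [Fintype ι] (Y : Option ι → C) (α : ∀ o, P.obj (op (Y o))) :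
    supProj P Y α = P.map (piOptionSplit Y).op
      (P.map (prod.fst : _ ⨯ (∏ᶜ fun i => Y (some i)) ⟶ _).op (α none) ⊔
        P.map (prod.snd : Y none ⨯ _ ⟶ _).op
          (supProj P (fun i => Y (some i)) fun i => α (some i))) := by
  rw [map_sup, ← map_comp_apply, ← map_comp_apply, supProj, supProj, map_finset_sup,
    sup_univ_option]
  congr 1
  · rw [piOptionSplit, prod.lift_fst]
  · refine sup_congr rfl fun i _ => ?_
    rw [Function.comp_apply, ← map_comp_apply, piOptionSplit, prod.lift_snd, Pi.lift_π]

lemma supProj_sum {ι₁ ι₂ : Type} [Fintype ι₁] [Fintype ι₂] (Y : ι₁ ⊕ ι₂ → C)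
    (α : ∀ i, P.obj (op (Y i))) :
    supProj P Y α =
      P.map (Pi.lift fun i => Pi.π Y (Sum.inl i)).op
          (supProj P (fun i => Y (Sum.inl i)) fun i => α (Sum.inl i)) ⊔
        P.map (Pi.lift fun i => Pi.π Y (Sum.inr i)).op
          (supProj P (fun i => Y (Sum.inr i)) fun i => α (Sum.inr i)) := by
  rw [supProj, supProj, supProj, map_finset_sup, map_finset_sup, ← univ_disjSum_univ, sup_disjSum]
  congr 1 <;> refine sup_congr rfl fun i _ => ?_ <;>
    rw [Function.comp_apply, ← map_comp_apply, Pi.lift_π]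

namespace IsUniversalIdeal

variable {J : ∀ X : C, Set (P.obj (op X))} (hJ : IsUniversalIdeal P J)
include hJ

lemma mem_of_inf_map_mem {X Y : C} {μ : Type} [Fintype μ] (f : μ → (X ⟶ Y))
    {β : P.obj (op Y)} (h : (univ.inf fun j => P.map (f j).op β) ∈ J X) : β ∈ J Y := by
  refine hJ.1 X Y _ (fun j => f ((Fintype.equivFin μ).symm j)) β ?_
  rwa [← univ_map_equiv_to_embedding (Fintype.equivFin μ).symm, inf_map] at h

lemma mem_of_map_mem {X Y : C} (f : X ⟶ Y) {β : P.obj (op Y)} (h : P.map f.op β ∈ J X) :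
    β ∈ J Y :=
  hJ.mem_of_inf_map_mem (fun _ : Unit => f) (by rwa [univ_unique, inf_singleton])

lemma map_mem_of_comp_eq_id {X Y : C} {g : X ⟶ Y} {s : Y ⟶ X} (hs : s ≫ g = 𝟙 Y)
    {β : P.obj (op Y)} (h : β ∈ J Y) : P.map g.op β ∈ J X :=
  hJ.mem_of_map_mem s (by rwa [← map_comp_apply, hs, map_id_apply])

lemma supProj_mem (ι : Type) [Fintype ι] (Y : ι → C) (α : ∀ i, P.obj (op (Y i)))
    (hα : ∀ i, α i ∈ J (Y i)) : supProj P Y α ∈ J (∏ᶜ Y) := by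
  revert Y α hα
  refine Finite.induction_empty_option (P := fun ι => ∀ [Fintype ι] (Y : ι → C)
    (α : ∀ i, P.obj (op (Y i))), (∀ i, α i ∈ J (Y i)) → supProj P Y α ∈ J (∏ᶜ Y)) ?_ ?_ ?_ ι
  · intro ι ι' e ih _ Y α hα
    let := Fintype.ofEquiv ι' e.symm
    refine hJ.mem_of_map_mem (Pi.reindex e Y).hom ?_
    rw [map_reindex_hom_supProj]
    exact ih _ _ fun i => hα (e i)
  · intro _ Y α _
    rw [supProj_of_isEmpty]
    refine hJ.mem_of_map_mem (Pi.lift fun i => i.elim : ⊤_ C ⟶ ∏ᶜ Y) ?_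
    rw [map_bot]
    exact hJ.2.2.2
  · intro ι _ ih inst Y α hα
    obtain rfl : inst = instFintypeOption := Subsingleton.elim _ _
    rw [supProj_option]
    exact hJ.map_mem_of_comp_eq_id (piOptionJoin_comp_split Y)
      (hJ.2.2.1 _ _ _ _ (hα none) (ih _ _ fun i => hα (some i)))

end IsUniversalIdeal

lemma map_prod_lift_sup {W X₁ X₂ : C} (g₁ : W ⟶ X₁) (g₂ : W ⟶ X₂) (a : P.obj (op X₁))
    (b : P.obj (op X₂)) :
    P.map (prod.lift g₁ g₂).op (P.map (prod.fst : X₁ ⨯ X₂ ⟶ X₁).op a ⊔ P.map prod.snd.op b) =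
      P.map g₁.op a ⊔ P.map g₂.op b := by
  rw [map_sup, ← map_comp_apply, ← map_comp_apply, prod.lift_fst, prod.lift_snd]

variable (P) in
def univIdealSpan (A : ∀ X : C, Set (P.obj (op X))) (X : C) : Set (P.obj (op X)) :=
  {φ | ∃ (ι κ : Type) (_ : Fintype ι) (_ : Fintype κ) (Y : ι → C) (α : ∀ i, P.obj (op (Y i)))
    (f : κ → (∏ᶜ Y ⟶ X)), (∀ i, α i ∈ A (Y i)) ∧
      (univ.inf fun k => P.map (f k).op φ) ≤ supProj P Y α}

variable {A : ∀ X : C, Set (P.obj (op X))}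

lemma subset_univIdealSpan (X : C) : A X ⊆ univIdealSpan P A X := fun a ha =>
  ⟨Unit, Unit, inferInstance, inferInstance, fun _ => X, fun _ => a, fun _ => Pi.π _ (),
    fun _ => ha, by simp [supProj]⟩

lemma mem_univIdealSpan_of_le {X : C} {a b : P.obj (op X)} (hab : a ≤ b)
    (hb : b ∈ univIdealSpan P A X) : a ∈ univIdealSpan P A X := by
  obtain ⟨ι, κ, _, _, Y, α, f, hα, hle⟩ := hb
  exact ⟨ι, κ, inferInstance, inferInstance, Y, α, f, hα,
    (inf_mono_fun fun k _ => OrderHomClass.mono _ hab).trans hle⟩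

lemma mem_univIdealSpan_of_inf_map_mem {X Y : C} {μ : Type} [Fintype μ] (f : μ → (X ⟶ Y))
    (a : P.obj (op Y)) (h : (univ.inf fun j => P.map (f j).op a) ∈ univIdealSpan P A X) :
    a ∈ univIdealSpan P A Y := by
  obtain ⟨ι, κ, _, _, Z, β, g, hβ, hle⟩ := h
  refine ⟨ι, κ × μ, inferInstance, inferInstance, Z, β, fun k => g k.1 ≫ f k.2, hβ,
    le_of_eq_of_le ?_ hle⟩
  rw [← univ_product_univ, inf_product_left]
  refine inf_congr rfl fun k _ => ?_
  rw [map_finset_inf]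
  exact inf_congr rfl fun j _ => map_comp_apply P _ _ _

lemma sup_mem_univIdealSpan {X₁ X₂ : C} {a : P.obj (op X₁)} {b : P.obj (op X₂)}
    (ha : a ∈ univIdealSpan P A X₁) (hb : b ∈ univIdealSpan P A X₂) :
    P.map (prod.fst : X₁ ⨯ X₂ ⟶ X₁).op a ⊔ P.map (prod.snd : X₁ ⨯ X₂ ⟶ X₂).op b ∈
      univIdealSpan P A (X₁ ⨯ X₂) := by
  obtain ⟨ι₁, κ₁, _, _, Y₁, α₁, f₁, hα₁, hle₁⟩ := ha
  obtain ⟨ι₂, κ₂, _, _, Y₂, α₂, f₂, hα₂, hle₂⟩ := hb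
  let Y : ι₁ ⊕ ι₂ → C := Sum.elim Y₁ Y₂
  let α : ∀ i, P.obj (op (Y i)) := Sum.rec α₁ α₂
  let p₁ : ∏ᶜ Y ⟶ ∏ᶜ Y₁ := Pi.lift fun i => Pi.π Y (Sum.inl i)
  let p₂ : ∏ᶜ Y ⟶ ∏ᶜ Y₂ := Pi.lift fun i => Pi.π Y (Sum.inr i)
  refine ⟨ι₁ ⊕ ι₂, κ₁ × κ₂, inferInstance, inferInstance, Y, α,
    fun k => prod.lift (p₁ ≫ f₁ k.1) (p₂ ≫ f₂ k.2), Sum.rec hα₁ hα₂, ?_⟩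
  calc (univ.inf fun k : κ₁ × κ₂ => P.map (prod.lift (p₁ ≫ f₁ k.1) (p₂ ≫ f₂ k.2)).op
          (P.map prod.fst.op a ⊔ P.map prod.snd.op b))
      = P.map p₁.op (univ.inf fun k => P.map (f₁ k).op a) ⊔
          P.map p₂.op (univ.inf fun k => P.map (f₂ k).op b) := by
        rw [map_finset_inf, map_finset_inf, inf_sup_inf, univ_product_univ]
        refine inf_congr rfl fun k _ => ?_
        rw [map_prod_lift_sup, map_comp_apply, map_comp_apply]
        rfl
    _ ≤ P.map p₁.op (supProj P Y₁ α₁) ⊔ P.map p₂.op (supProj P Y₂ α₂) :=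
        sup_le_sup (OrderHomClass.mono _ hle₁) (OrderHomClass.mono _ hle₂)
    _ = supProj P Y α := (supProj_sum Y α).symm

lemma bot_mem_univIdealSpan : (⊥ : P.obj (op (⊤_ C))) ∈ univIdealSpan P A (⊤_ C) :=
  ⟨Empty, Unit, inferInstance, inferInstance, Empty.elim, fun i => i.elim,
    fun _ => terminal.from _, fun i => i.elim, by simp [map_bot]⟩

variable (P A) in
lemma isUniversalIdeal_univIdealSpan : IsUniversalIdeal P (univIdealSpan P A) :=
  ⟨fun _ _ _ f α h => mem_univIdealSpan_of_inf_map_mem f α h,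
    fun _ _ _ hab hb => mem_univIdealSpan_of_le hab hb,
    fun _ _ _ _ ha hb => sup_mem_univIdealSpan ha hb, bot_mem_univIdealSpan⟩

lemma univIdealSpan_subset {J : ∀ X : C, Set (P.obj (op X))} (hJ : IsUniversalIdeal P J)
    (hAJ : ∀ X, A X ⊆ J X) (X : C) : univIdealSpan P A X ⊆ J X := by
  rintro φ ⟨ι, κ, _, _, Y, α, f, hα, hle⟩
  exact hJ.mem_of_inf_map_mem f
    (hJ.2.1 _ _ _ hle (hJ.supProj_mem ι Y α fun i => hAJ _ (hα i)))

lemma mem_univIdealSpan_iff {X : C} {φ : P.obj (op X)} :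
    φ ∈ univIdealSpan P A X ↔
      ∃ (n m : ℕ) (Y : Fin n → C) (α : ∀ i, P.obj (op (Y i))) (f : Fin m → ((∏ᶜ Y) ⟶ X)),
        (∀ i, α i ∈ A (Y i)) ∧
          (univ.inf fun j => P.map (f j).op φ) ≤ univ.sup fun i => P.map (Pi.π Y i).op (α i) := by
  constructor
  · rintro ⟨ι, κ, _, _, Y, α, f, hα, hle⟩
    let ε := (Fintype.equivFin ι).symm
    let δ := (Fintype.equivFin κ).symm
    refine ⟨_, _, Y ∘ ε, fun i => α (ε i), fun j => (Pi.reindex ε Y).hom ≫ f (δ j),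
      fun i => hα (ε i), ?_⟩
    calc (univ.inf fun j => P.map ((Pi.reindex ε Y).hom ≫ f (δ j)).op φ)
        = P.map (Pi.reindex ε Y).hom.op (univ.inf fun k => P.map (f k).op φ) := by
          rw [map_finset_inf, ← univ_map_equiv_to_embedding δ, inf_map]
          exact inf_congr rfl fun j _ => map_comp_apply P _ _ _
      _ ≤ P.map (Pi.reindex ε Y).hom.op (supProj P Y α) := OrderHomClass.mono _ hle
      _ = supProj P (Y ∘ ε) fun i => α (ε i) := map_reindex_hom_supProj ε Y α
  · rintro ⟨n, m, Y, α, f, hα, hle⟩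
    exact ⟨Fin n, Fin m, inferInstance, inferInstance, Y, α, f, hα, hle⟩

end

theorem stmt11 {C : Type u₁} [Category.{v₁} C] [HasFiniteProducts C]
    (P : Cᵒᵖ ⥤ BoolAlg.{w}) (A Igen : ∀ X : C, Set (P.obj (op X)))
    (hIgen : ∀ (X : C) (φ : P.obj (op X)),
      φ ∈ Igen X ↔
        ∃ (n m : ℕ) (Y : Fin n → C) (α : ∀ i, P.obj (op (Y i)))
          (f : Fin m → ((∏ᶜ Y) ⟶ X)),
          (∀ i, α i ∈ A (Y i)) ∧
            (Finset.univ.inf fun j => P.map (f j).op φ) ≤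
              Finset.univ.sup fun i => P.map (Pi.π Y i).op (α i)) :
    IsUniversalIdeal P Igen ∧ (∀ X : C, A X ⊆ Igen X) ∧
      ∀ J : ∀ X : C, Set (P.obj (op X)),
        IsUniversalIdeal P J → (∀ X : C, A X ⊆ J X) → ∀ X : C, Igen X ⊆ J X := by
  obtain rfl : Igen = univIdealSpan P A :=
    funext fun X => Set.ext fun φ => (hIgen X φ).trans mem_univIdealSpan_iff.symm
  exact ⟨isUniversalIdeal_univIdealSpan P A, subset_univIdealSpan,
    fun J hJ hAJ => univIdealSpan_subset hJ hAJ⟩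

end BooleanDoctrine
end
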